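/- arXiv:1408.0879 — 2 statements merged into one kernel-verified Lean document; each statement's English description precedes it below -/
import Mathlib

section
/- Let Γ be a simple graph with basepoint vertex o and let f : ℕ → ℝ be a nonnegative function. Let w be a walk from u to v (with u, v in the component of o and d(o,u) ≤ d(o,v)) whose number of edges equals d(o,v) − d(o,u). Then the Floyd length of w equals ∑_{i=d(o,u)}^{d(o,v)−1} f(i), and consequently every walk from u to v has Floyd length at least the Floyd length of w. In particular, any segment of a geodesic ray emanating from o minimizes Floyd length among all walks with the same endpoints, i.e., geodesic rays starting at the basepoint are Floyd geodesics. -/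
/-- The Floyd length of a walk `w` in a simple graph `Γ` with basepoint `o`, with respect
to a scaling function `f : ℕ → ℝ`: the sum over the darts `(x, y)` of `w` of
`f (min (d o x) (d o y))`, where `d` is the graph distance. -/
noncomputable def floydLength {V : Type*} (Γ : SimpleGraph V) (o : V) (f : ℕ → ℝ)
    {u v : V} (w : Γ.Walk u v) : ℝ :=
  (w.darts.map (fun d => f (min (Γ.dist o d.fst) (Γ.dist o d.snd)))).sum

/-!
Along any dart the distance to `o` changes by at most one, so a walk from `u` to `v` crosses
every level `i ∈ [d(o,u), d(o,v))` along some dart whose lower endpoint is at distance `i`;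
such a dart costs `f i`. Hence every walk from `u` to `v` has Floyd length at least
`∑_{i = d(o,u)}^{d(o,v) - 1} f i`. A walk with only `d(o,v) - d(o,u)` edges must go up one
level at every step, so it crosses each level exactly once and nothing else, and its Floyd
length is exactly that sum.
-/

open Finset

lemma Finset.sum_Ico_le_add_sum_Ico {f : ℕ → ℝ} (hf : ∀ n, 0 ≤ f n) {m n : ℕ} (hnm : n ≤ m + 1)
    (k : ℕ) : ∑ i ∈ Ico m k, f i ≤ f (min m n) + ∑ i ∈ Ico n k, f i := by
  rcases le_or_gt n m with hle | hgt
  · have := sum_le_sum_of_subset_of_nonneg (Ico_subset_Ico_left (b := k) hle)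
      (fun i _ _ => hf i)
    linarith [hf (min m n)]
  obtain rfl : n = m + 1 := by omega
  rw [min_eq_left hgt.le]
  rcases lt_or_ge m k with hmk | hkm
  · exact (sum_eq_sum_Ico_succ_bot hmk f).le
  · rw [Ico_eq_empty_of_le hkm, Ico_eq_empty_of_le (by omega), sum_empty, add_zero]
    exact hf m

namespace SimpleGraph

variable {V : Type*} {Γ : SimpleGraph V} {o : V}

lemma dist_le_dist_add_length {a b : V} (p : Γ.Walk a b) :
    Γ.dist o b ≤ Γ.dist o a + p.length :=
  (p.reachable.dist_triangle_right o).trans (Nat.add_le_add_left (Γ.dist_le p) _)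

lemma Adj.dist_le_dist_add_one {a b : V} (h : Γ.Adj a b) : Γ.dist o b ≤ Γ.dist o a + 1 :=
  dist_le_dist_add_length (.cons h .nil)

end SimpleGraph

section

open SimpleGraph

variable {V : Type*} {Γ : SimpleGraph V} {o : V}

@[simp]
lemma floydLength_nil (f : ℕ → ℝ) (a : V) : floydLength Γ o f (Walk.nil : Γ.Walk a a) = 0 := by
  simp [floydLength]

@[simp]
lemma floydLength_cons (f : ℕ → ℝ) {a c b : V} (h : Γ.Adj a c) (p : Γ.Walk c b) :
    floydLength Γ o f (.cons h p) = f (min (Γ.dist o a) (Γ.dist o c)) + floydLength Γ o f p := by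
  simp [floydLength]

theorem sum_Ico_dist_le_floydLength {f : ℕ → ℝ} (hf : ∀ n, 0 ≤ f n) {a b : V}
    (p : Γ.Walk a b) : ∑ i ∈ Ico (Γ.dist o a) (Γ.dist o b), f i ≤ floydLength Γ o f p := by
  induction p with
  | nil => simp
  | @cons a c b h p ih =>
    rw [floydLength_cons]
    calc ∑ i ∈ Ico (Γ.dist o a) (Γ.dist o b), f i
        ≤ f (min (Γ.dist o a) (Γ.dist o c)) + ∑ i ∈ Ico (Γ.dist o c) (Γ.dist o b), f i :=
          sum_Ico_le_add_sum_Ico hf h.dist_le_dist_add_one _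
      _ ≤ _ := by gcongr

theorem floydLength_eq_sum_Ico_dist (f : ℕ → ℝ) {a b : V} (p : Γ.Walk a b)
    (hp : p.length = Γ.dist o b - Γ.dist o a) :
    floydLength Γ o f p = ∑ i ∈ Ico (Γ.dist o a) (Γ.dist o b), f i := by
  induction p with
  | nil => simp
  | @cons a c b h p ih =>
    rw [Walk.length_cons] at hp
    have hac := h.dist_le_dist_add_one (o := o)
    have hcb := Γ.dist_le_dist_add_length (o := o) p
    obtain ⟨hc, hab⟩ : Γ.dist o c = Γ.dist o a + 1 ∧ Γ.dist o a < Γ.dist o b := by omega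
    rw [floydLength_cons, ih (by omega), hc, min_eq_left (Nat.le_succ _),
      sum_eq_sum_Ico_succ_bot hab]

end

theorem floydLength_eq_sum_and_min_general {V : Type*} (Γ : SimpleGraph V) (o : V) (f : ℕ → ℝ)
    (hf : ∀ n, 0 ≤ f n) (u v : V) (w : Γ.Walk u v)
    (hw : w.length = Γ.dist o v - Γ.dist o u) :
    floydLength Γ o f w = ∑ i ∈ Finset.Ico (Γ.dist o u) (Γ.dist o v), f i ∧
      ∀ w' : Γ.Walk u v, floydLength Γ o f w ≤ floydLength Γ o f w' := by
  have hsum := floydLength_eq_sum_Ico_dist f w hw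
  exact ⟨hsum, fun w' => hsum ▸ sum_Ico_dist_le_floydLength hf w'⟩

/-- A walk from `u` to `v` with exactly `d(o,v) - d(o,u)` edges (e.g. a segment of a
geodesic ray emanating from `o`) has Floyd length exactly
`∑_{i = d(o,u)}^{d(o,v) - 1} f i`, and it minimizes Floyd length among all walks from
`u` to `v`; that is, geodesic rays starting at the basepoint are Floyd geodesics. -/
theorem floydLength_eq_sum_and_min {V : Type*} (Γ : SimpleGraph V) (o : V) (f : ℕ → ℝ)
    (hf : ∀ n, 0 ≤ f n) (u v : V) (hu : Γ.Reachable o u) (hv : Γ.Reachable o v)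
    (huv : Γ.dist o u ≤ Γ.dist o v) (w : Γ.Walk u v)
    (hw : w.length = Γ.dist o v - Γ.dist o u) :
    floydLength Γ o f w = ∑ i ∈ Finset.Ico (Γ.dist o u) (Γ.dist o v), f i ∧
      ∀ w' : Γ.Walk u v, floydLength Γ o f w ≤ floydLength Γ o f w' :=
  floydLength_eq_sum_and_min_general Γ o f hf u v w hw
end

section
/- Let F be a free group with free generating set S, K a subgroup of F, and G = F *_K F the double with canonical homomorphisms ι₁, ι₂ : F → G and symmetric generating set X = ι₁(S) ∪ ι₂(S) together with inverses. Then for every g ∈ G there exist k ∈ ℕ, elements v₁, …, v_k ∈ F, and an alternating assignment ε : {1,…,k} → {1,2} (ε_{i+1} ≠ ε_i for all i), with v_i ∉ K for every i whenever k ≥ 2, such that g = ι_{ε₁}(v₁)·ι_{ε₂}(v₂)⋯ι_{ε_k}(v_k) and the word length of g in G with respect to X equals |v₁| + |v₂| + ⋯ + |v_k|. -/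
/-- The word length of `g` with respect to a generating set `X` (symmetrized, i.e.
inverses of elements of `X` are allowed as letters): the least length of a word in
`X ∪ X⁻¹` representing `g`. -/
noncomputable def wordLength {G : Type*} [Group G] (X : Set G) (g : G) : ℕ :=
  sInf {n | ∃ l : List G, (∀ x ∈ l, x ∈ X ∨ x⁻¹ ∈ X) ∧ l.length = n ∧ l.prod = g}

/-- The double `F *_K F` of the free group `F = FreeGroup α` along the subgroup `K`:
the pushout of the inclusion `K ↪ F` with itself. -/
abbrev FreeDouble {α : Type*} (K : Subgroup (FreeGroup α)) : Type _ :=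
  Monoid.PushoutI (fun _ : Bool => K.subtype)

/-- The two canonical homomorphisms `ι₁, ι₂ : F →* F *_K F` (indexed by `Bool`). -/
abbrev FreeDouble.incl {α : Type*} (K : Subgroup (FreeGroup α)) (i : Bool) :
    FreeGroup α →* FreeDouble K :=
  Monoid.PushoutI.of (φ := fun _ : Bool => K.subtype) i

/-- The symmetric generating set `X = ι₁(S) ∪ ι₂(S)` of `F *_K F`, where `S` is the
free generating set of `F`. -/
def FreeDouble.gens {α : Type*} (K : Subgroup (FreeGroup α)) : Set (FreeDouble K) :=
  Set.range (fun s : α => FreeDouble.incl K true (FreeGroup.of s)) ∪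
    Set.range (fun s : α => FreeDouble.incl K false (FreeGroup.of s))

/-!
A product `ι_b(v) · ι_{ε₁}(v₁) ⋯ ι_{ε_k}(v_k)` with the `ι_{ε_i}(v_i)` in normal form
can be rewritten in normal form without increasing `|v| + |v₁| + ⋯ + |v_k|`: unless `ι_b(v)` can
simply be prepended, `v` is absorbed into `v₁` (as `ι₁` and `ι₂` agree on `K`), and if `v v₁`
then falls into `K`, it is absorbed further into `v₂`.
Reducing a geodesic word in the generators letter by letter thus gives a normal form of total
length at most the word length; conversely, spelling out each `v_i` as a reduced word gives a
word of length `|v₁| + ⋯ + |v_k|`.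
-/

open Pointwise

section WordLength

variable {G : Type*} [Group G] {X : Set G}

theorem wordLength_le_length {w : List G} (hw : ∀ x ∈ w, x ∈ X ∪ X⁻¹) :
    wordLength X w.prod ≤ w.length :=
  Nat.sInf_le ⟨w, hw, rfl, rfl⟩

theorem exists_word_length_eq_wordLength {g : G} {w : List G} (hw : ∀ x ∈ w, x ∈ X ∪ X⁻¹)
    (hg : w.prod = g) :
    ∃ w' : List G, (∀ x ∈ w', x ∈ X ∪ X⁻¹) ∧ w'.length = wordLength X g ∧ w'.prod = g := by
  obtain ⟨w', hw', hlen, hprod⟩ := Nat.sInf_mem (s := {n | ∃ l : List G,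
    (∀ x ∈ l, x ∈ X ∨ x⁻¹ ∈ X) ∧ l.length = n ∧ l.prod = g}) ⟨w.length, w, hw, rfl, hg⟩
  exact ⟨w', hw', hlen, hprod⟩

end WordLength

namespace FreeDouble

variable {α : Type*} (K : Subgroup (FreeGroup α))

def eval (l : List (Bool × FreeGroup α)) : FreeDouble K :=
  (l.map fun p => incl K p.1 p.2).prod

def weight [DecidableEq α] (l : List (Bool × FreeGroup α)) : ℕ :=
  (l.map fun p => p.2.norm).sum

def IsNormalForm (l : List (Bool × FreeGroup α)) : Prop :=
  l.IsChain (fun p q => p.1 ≠ q.1) ∧ (2 ≤ l.length → ∀ p ∈ l, p.2 ∉ K)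

@[simp] theorem eval_cons (p : Bool × FreeGroup α) (l : List (Bool × FreeGroup α)) :
    eval K (p :: l) = incl K p.1 p.2 * eval K l :=
  List.prod_cons

@[simp] theorem weight_cons [DecidableEq α] (p : Bool × FreeGroup α)
    (l : List (Bool × FreeGroup α)) : weight (p :: l) = p.2.norm + weight l :=
  List.sum_cons

theorem incl_eq_incl_of_mem {v : FreeGroup α} (hv : v ∈ K) (b b' : Bool) :
    incl K b v = incl K b' v :=
  (Monoid.PushoutI.of_apply_eq_base (φ := fun _ : Bool => K.subtype) b ⟨v, hv⟩).trans
    (Monoid.PushoutI.of_apply_eq_base (φ := fun _ : Bool => K.subtype) b' ⟨v, hv⟩).symm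

theorem incl_of_mem_gens (b : Bool) (s : α) : incl K b (FreeGroup.of s) ∈ gens K := by
  cases b
  · exact Or.inr ⟨s, rfl⟩
  · exact Or.inl ⟨s, rfl⟩

theorem exists_incl_eq_of_mem_gens [DecidableEq α] {x : FreeDouble K}
    (hx : x ∈ gens K ∪ (gens K)⁻¹) :
    ∃ p : Bool × FreeGroup α, p.2.norm = 1 ∧ incl K p.1 p.2 = x := by
  rcases hx with (⟨s, rfl⟩ | ⟨s, rfl⟩) | (⟨s, hs⟩ | ⟨s, hs⟩)
  · exact ⟨(true, .of s), FreeGroup.norm_of s, rfl⟩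
  · exact ⟨(false, .of s), FreeGroup.norm_of s, rfl⟩
  all_goals
    refine ⟨(_, (.of s)⁻¹), ?_, (map_inv _ _).trans (inv_eq_iff_eq_inv.2 hs)⟩
    rw [FreeGroup.norm_inv_eq, FreeGroup.norm_of]

theorem exists_word_incl [DecidableEq α] (b : Bool) (v : FreeGroup α) :
    ∃ w : List (FreeDouble K), (∀ x ∈ w, x ∈ gens K ∪ (gens K)⁻¹) ∧
      w.length = v.norm ∧ w.prod = incl K b v := by
  let f : α → FreeDouble K := fun s => incl K b (FreeGroup.of s)
  refine ⟨v.toWord.map fun p => cond p.2 (f p.1) (f p.1)⁻¹, ?_, by simp [FreeGroup.norm], ?_⟩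
  · simp only [List.mem_map]
    rintro x ⟨⟨s, _ | _⟩, -, rfl⟩
    · exact Or.inr (by simpa [Set.mem_inv] using incl_of_mem_gens K b s)
    · exact Or.inl (incl_of_mem_gens K b s)
  · rw [← FreeGroup.lift_mk, FreeGroup.mk_toWord]
    exact (FreeGroup.lift_unique _ fun _ => rfl).symm

theorem exists_word_eval [DecidableEq α] (l : List (Bool × FreeGroup α)) :
    ∃ w : List (FreeDouble K), (∀ x ∈ w, x ∈ gens K ∪ (gens K)⁻¹) ∧
      w.length = weight l ∧ w.prod = eval K l := by
  induction l with
  | nil => exact ⟨[], by simp, rfl, rfl⟩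
  | cons p l ih =>
    obtain ⟨w, hw, hlen, hprod⟩ := ih
    obtain ⟨u, hu, ulen, uprod⟩ := exists_word_incl K p.1 p.2
    refine ⟨u ++ w, List.forall_mem_append.2 ⟨hu, hw⟩, ?_, ?_⟩
    · rw [List.length_append, ulen, hlen, weight_cons]
    · rw [List.prod_append, uprod, hprod, eval_cons]

theorem exists_eval_eq_prod_of_word [DecidableEq α] {w : List (FreeDouble K)}
    (hw : ∀ x ∈ w, x ∈ gens K ∪ (gens K)⁻¹) :
    ∃ l : List (Bool × FreeGroup α), eval K l = w.prod ∧ weight l = w.length := by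
  induction w with
  | nil => exact ⟨[], rfl, rfl⟩
  | cons x w ih =>
    obtain ⟨l, hl, hlen⟩ := ih fun y hy => hw y (List.mem_cons_of_mem x hy)
    obtain ⟨p, hp, rfl⟩ := exists_incl_eq_of_mem_gens K (hw x List.mem_cons_self)
    exact ⟨p :: l, by rw [eval_cons, hl, List.prod_cons], by rw [weight_cons, hp, hlen,
      List.length_cons, add_comm]⟩

theorem exists_eval_eq (g : FreeDouble K) : ∃ l : List (Bool × FreeGroup α), eval K l = g := by
  induction g using Monoid.PushoutI.induction_on with
  | of b v => exact ⟨[(b, v)], mul_one _⟩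
  | base k =>
    exact ⟨[(true, k)], (mul_one _).trans (Monoid.PushoutI.of_apply_eq_base _ true k)⟩
  | mul x y hx hy =>
    obtain ⟨l₁, rfl⟩ := hx
    obtain ⟨l₂, rfl⟩ := hy
    exact ⟨l₁ ++ l₂, by simp [eval]⟩

namespace IsNormalForm

variable {K}

theorem nil : IsNormalForm K [] := ⟨List.isChain_nil, by simp⟩

theorem singleton (p : Bool × FreeGroup α) : IsNormalForm K [p] :=
  ⟨List.isChain_singleton p, by simp⟩

theorem tail {p : Bool × FreeGroup α} {l : List (Bool × FreeGroup α)}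
    (h : IsNormalForm K (p :: l)) : IsNormalForm K l :=
  ⟨h.1.tail, fun hl q hq => h.2 (by simp; omega) q (List.mem_cons_of_mem p hq)⟩

theorem replace_head {b : Bool} {w x : FreeGroup α} {l : List (Bool × FreeGroup α)}
    (h : IsNormalForm K ((b, w) :: l)) (hx : l = [] ∨ x ∉ K) : IsNormalForm K ((b, x) :: l) := by
  rcases l with _ | ⟨q, l⟩
  · exact singleton _
  · refine ⟨List.isChain_cons_cons.2 (List.isChain_cons_cons.1 h.1), fun hl p hp => ?_⟩
    rcases List.mem_cons.1 hp with rfl | hp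
    · exact hx.resolve_left (List.cons_ne_nil _ _)
    · exact h.2 hl p (List.mem_cons_of_mem _ hp)

theorem cons_cons {b b' : Bool} {v w : FreeGroup α} {l : List (Bool × FreeGroup α)}
    (h : IsNormalForm K ((b', w) :: l)) (hb : b ≠ b') (hv : v ∉ K) (hw : w ∉ K) :
    IsNormalForm K ((b, v) :: (b', w) :: l) := by
  refine ⟨List.isChain_cons_cons.2 ⟨hb, h.1⟩, fun _ p hp => ?_⟩
  rcases List.mem_cons.1 hp with rfl | hp
  · exact hv
  rcases List.mem_cons.1 hp with rfl | hp
  · exact hw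
  · exact h.2 (by simp; exact List.length_pos_of_mem hp) p (List.mem_cons_of_mem _ hp)

end IsNormalForm

variable [DecidableEq α]

theorem exists_isNormalForm_incl_mul_eval_cons {b : Bool} {w : FreeGroup α}
    {l : List (Bool × FreeGroup α)} (h : IsNormalForm K ((b, w) :: l)) (v : FreeGroup α) :
    ∃ l', IsNormalForm K l' ∧ eval K l' = incl K b v * eval K ((b, w) :: l) ∧
      weight l' ≤ v.norm + weight ((b, w) :: l) := by
  have hvw := FreeGroup.norm_mul_le v w
  by_cases hmerge : l = [] ∨ v * w ∉ K
  · refine ⟨(b, v * w) :: l, h.replace_head hmerge, by simp [mul_assoc], ?_⟩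
    simp only [weight_cons]
    omega
  obtain ⟨hl, hvwK⟩ : l ≠ [] ∧ v * w ∈ K := by simpa using hmerge
  obtain ⟨⟨b', u⟩, l, rfl⟩ := List.exists_cons_of_ne_nil hl
  have hu : u ∉ K := h.2 (by simp) (b', u) (by simp)
  refine ⟨(b', v * w * u) :: l, h.tail.replace_head (.inr fun hk => hu ?_), ?_, ?_⟩
  · exact (K.mul_mem_cancel_left hvwK).1 hk
  · simp only [eval_cons]
    rw [map_mul, incl_eq_incl_of_mem K hvwK b' b, map_mul, mul_assoc, mul_assoc]
  · have := FreeGroup.norm_mul_le (v * w) u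
    simp only [weight_cons]
    omega

theorem exists_isNormalForm_incl_mul_eval {l : List (Bool × FreeGroup α)}
    (h : IsNormalForm K l) (b : Bool) (v : FreeGroup α) :
    ∃ l', IsNormalForm K l' ∧ eval K l' = incl K b v * eval K l ∧
      weight l' ≤ v.norm + weight l := by
  rcases l with _ | ⟨⟨b', w⟩, l⟩
  · exact ⟨[(b, v)], .singleton _, rfl, by simp⟩
  by_cases hb : b = b' ∨ v ∈ K
  · have : incl K b v = incl K b' v := hb.elim (by rintro rfl; rfl) (incl_eq_incl_of_mem K · b b')
    rw [this]
    exact exists_isNormalForm_incl_mul_eval_cons K h v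
  rw [not_or] at hb
  by_cases hw : w ∈ K
  · obtain rfl : l = [] := by
      by_contra hl
      exact h.2 (by simp; exact List.length_pos_iff.2 hl) _ List.mem_cons_self hw
    have : eval K [(b', w)] = eval K [(b, w)] := by simp [incl_eq_incl_of_mem K hw b' b]
    simpa [this] using exists_isNormalForm_incl_mul_eval_cons K (.singleton (b, w)) v
  · exact ⟨(b, v) :: (b', w) :: l, h.cons_cons hb.1 hb.2 hw, rfl, by simp⟩

theorem exists_isNormalForm_eval_eq (L : List (Bool × FreeGroup α)) :
    ∃ l, IsNormalForm K l ∧ eval K l = eval K L ∧ weight l ≤ weight L := by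
  induction L with
  | nil => exact ⟨[], .nil, rfl, le_rfl⟩
  | cons p L ih =>
    obtain ⟨l, hl, heval, hweight⟩ := ih
    obtain ⟨l', hl', heval', hweight'⟩ := exists_isNormalForm_incl_mul_eval K hl p.1 p.2
    refine ⟨l', hl', by rw [heval', heval, eval_cons], ?_⟩
    rw [weight_cons]
    omega

end FreeDouble

open FreeDouble

/-- Every element of the double `G = F *_K F` admits a normal form geodesic word:
`g = ι_{ε₁}(v₁) ⋯ ι_{ε_k}(v_k)` with the factors alternating (`ε_{i+1} ≠ ε_i`), each
`v_i ∉ K` whenever `k ≥ 2`, and the word length of `g` with respect to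
`X = ι₁(S) ∪ ι₂(S)` equal to `|v₁| + ⋯ + |v_k|`. -/
theorem freeDouble_exists_normal_form_geodesic {α : Type*} [DecidableEq α]
    (K : Subgroup (FreeGroup α)) (g : FreeDouble K) :
    ∃ l : List (Bool × FreeGroup α),
      l.Chain' (fun p q => p.1 ≠ q.1) ∧
      (2 ≤ l.length → ∀ p ∈ l, p.2 ∉ K) ∧
      (l.map (fun p => FreeDouble.incl K p.1 p.2)).prod = g ∧
      wordLength (FreeDouble.gens K) g = (l.map (fun p => p.2.norm)).sum := by
  obtain ⟨L, rfl⟩ := exists_eval_eq K g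
  obtain ⟨w₀, hw₀, -, hprod₀⟩ := exists_word_eval K L
  obtain ⟨w, hw, hlen, hprod⟩ := exists_word_length_eq_wordLength hw₀ hprod₀
  obtain ⟨L', hL'eval, hL'weight⟩ := exists_eval_eq_prod_of_word K hw
  obtain ⟨l, hl, heval, hweight⟩ := exists_isNormalForm_eval_eq K L'
  rw [hL'eval, hprod] at heval
  obtain ⟨v, hv, hvlen, hvprod⟩ := exists_word_eval K l
  refine ⟨l, hl.1, hl.2, heval, le_antisymm ?_ ?_⟩
  · calc wordLength (gens K) (eval K L) = wordLength (gens K) v.prod := by rw [hvprod, heval]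
      _ ≤ v.length := wordLength_le_length hv
      _ = weight l := hvlen
  · calc weight l ≤ weight L' := hweight
      _ = wordLength (gens K) (eval K L) := by rw [hL'weight, hlen]
end
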